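/- Lemma 10: assume that for every atom atm the transformer ⟨⟦atm⟧ᵣ⟩ satisfies PSC. Then for every command c of the language and every subset closed Q : Set (Set Σ), the collection ⟦c⟧ₕ Q is subset closed. -/
import Mathlib


/-- Direct image of a relation `R ⊆ A × B`, as a map `Set A → Set B`. -/
def dirimg {α β : Type*} (R : Set (α × β)) : Set α → Set β :=
  fun p => {y | ∃ x ∈ p, (x, y) ∈ R}

/-- Direct image of a function `Set A → Set B` viewed as a relation. -/
def fimg {α β : Type*} (φ : Set α → Set β) : Set (Set α) → Set (Set β) :=
  fun Q => {q | ∃ p ∈ Q, q = φ p}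

/-- Subset closure of a collection of sets. -/
def ssc {α : Type*} (Q : Set (Set α)) : Set (Set α) := {p | ∃ q ∈ Q, p ⊆ q}

/-- PSC: the transformer is monotone and every subset of an image is the image of a subset. -/
def PSC {α β : Type*} (φ : Set α → Set β) : Prop :=
  Monotone φ ∧ ∀ q r, r ⊆ φ q → ∃ s, s ⊆ q ∧ φ s = r

/-- Universally disjunctive: preserves arbitrary unions. -/
def UnivDisj {α β : Type*} (φ : Set α → Set β) : Prop :=
  ∀ S : Set (Set α), φ (⋃₀ S) = ⋃ p ∈ S, φ p

/-- Domain of a transformer. -/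
def Dom {α β : Type*} (φ : Set α → Set β) : Set α := {x | φ {x} ≠ ∅}

/-- Forward relational composition. -/
def relComp {α : Type*} (R S : Set (α × α)) : Set (α × α) :=
  {p | ∃ z, (p.1, z) ∈ R ∧ (z, p.2) ∈ S}

/-- Coreflexive relation determined by a set. -/
def coref {α : Type*} (B : Set α) : Set (α × α) := {p | p.1 = p.2 ∧ p.1 ∈ B}

/-- Inner join of h-transformers. -/
def innerJoin {α : Type*} (Φ Ψ : Set (Set α) → Set (Set α)) : Set (Set α) → Set (Set α) :=
  fun Q => {t | ∃ p ∈ Q, ∃ r ∈ Φ {u | u ⊆ p}, ∃ s ∈ Ψ {u | u ⊆ p}, t = r ∪ s}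

/-- Hyper-conditional with guard set `B`. -/
def hcond {α : Type*} (B : Set α) (Φ Ψ : Set (Set α) → Set (Set α)) :
    Set (Set α) → Set (Set α) :=
  fun Q => {t | ∃ p ∈ Q, ∃ r ∈ Φ {u | u ⊆ p ∩ B}, ∃ s ∈ Ψ {u | u ⊆ p \ B}, t = r ∪ s}

/-- Commands over atoms `A` and boolean expressions `B`. -/
inductive Cmd (A B : Type*) where
  | atom : A → Cmd A B
  | skip : Cmd A B
  | seq : Cmd A B → Cmd A B → Cmd A B
  | choice : Cmd A B → Cmd A B → Cmd A B
  | ite : B → Cmd A B → Cmd A B → Cmd A B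
  | whileDo : B → Cmd A B → Cmd A B

/-- Relational semantics: `⟦c⟧ᵣ ⊆ Σ × Σ`. The while case is the least fixpoint
(Knaster–Tarski: `sInf` of the prefixpoints) of `F R = ⟦b⟧;⟦c⟧;R ∪ ⟦¬b⟧`. -/
def relSem {σ A B : Type*} (ratm : A → Set (σ × σ)) (bsem : B → Set σ) :
    Cmd A B → Set (σ × σ)
  | .atom a => ratm a
  | .skip => {p | p.1 = p.2}
  | .seq c d => relComp (relSem ratm bsem c) (relSem ratm bsem d)
  | .choice c d => relSem ratm bsem c ∪ relSem ratm bsem d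
  | .ite b c d =>
      relComp (coref (bsem b)) (relSem ratm bsem c) ∪
        relComp (coref (bsem b)ᶜ) (relSem ratm bsem d)
  | .whileDo b c =>
      sInf {R | relComp (coref (bsem b)) (relComp (relSem ratm bsem c) R) ∪
        coref (bsem b)ᶜ ⊆ R}

/-- Transformer semantics `⟦c⟧ₜ : Set Σ → Set Σ`. The while case is the least
fixpoint (`sInf` of the prefixpoints, in the pointwise-ordered lattice of all
functions `Set Σ → Set Σ`) of `G φ p = φ (⟦c⟧ₜ (p ∩ B)) ∪ (p \ B)`. -/
def tSem {σ A B : Type*} (ratm : A → Set (σ × σ)) (bsem : B → Set σ) :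
    Cmd A B → Set σ → Set σ
  | .atom a => dirimg (ratm a)
  | .skip => id
  | .seq c d => fun p => tSem ratm bsem d (tSem ratm bsem c p)
  | .choice c d => fun p => tSem ratm bsem c p ∪ tSem ratm bsem d p
  | .ite b c d => fun p => tSem ratm bsem c (p ∩ bsem b) ∪ tSem ratm bsem d (p \ bsem b)
  | .whileDo b c =>
      sInf {φ | (fun p => φ (tSem ratm bsem c (p ∩ bsem b)) ∪ (p \ bsem b)) ≤ φ}

/-- Membership in `Dpset (𝒫 Σ)`: nonempty and subset closed. -/
def InDpset {α : Type*} (Q : Set (Set α)) : Prop := Q.Nonempty ∧ Q = ssc Q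

/-- Least fixpoint of `H` in the complete lattice of monotone functions on
`Dpset (𝒫 Σ)` (nonempty subset-closed collections ordered by `⊆`), where infima
are pointwise intersections; by Knaster–Tarski it is the pointwise intersection
of all monotone `Dpset`-preserving prefixpoints of `H`. -/
def hlfp {α : Type*} (H : (Set (Set α) → Set (Set α)) → (Set (Set α) → Set (Set α))) :
    Set (Set α) → Set (Set α) :=
  fun Q => ⋂₀ {R | ∃ Φ : Set (Set α) → Set (Set α),
    (∀ Q', InDpset Q' → InDpset (Φ Q')) ∧
    (∀ Q₁ Q₂, InDpset Q₁ → InDpset Q₂ → Q₁ ⊆ Q₂ → Φ Q₁ ⊆ Φ Q₂) ∧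
    (∀ Q', InDpset Q' → H Φ Q' ⊆ Φ Q') ∧ R = Φ Q}

/-- H-transformer semantics `⟦c⟧ₕ : Set (Set Σ) → Set (Set Σ)`. The while case is
the least fixpoint of `H Φ = (Φ ∘ ⟦c⟧ₕ) ◁B▷ id` in the complete lattice of
monotone functions on `Dpset (𝒫 Σ)`. -/
def hSem {σ A B : Type*} (ratm : A → Set (σ × σ)) (bsem : B → Set σ) :
    Cmd A B → Set (Set σ) → Set (Set σ)
  | .atom a => fimg (dirimg (ratm a))
  | .skip => id
  | .seq c d => fun Q => hSem ratm bsem d (hSem ratm bsem c Q)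
  | .choice c d => innerJoin (hSem ratm bsem c) (hSem ratm bsem d)
  | .ite b c d => hcond (bsem b) (hSem ratm bsem c) (hSem ratm bsem d)
  | .whileDo b c => hlfp (fun Φ => hcond (bsem b) (fun Q => Φ (hSem ratm bsem c Q)) id)

/-- A command contains no nondeterministic choice `⊓`. -/
def NoChoice {A B : Type*} : Cmd A B → Prop
  | .atom _ => True
  | .skip => True
  | .seq c d => NoChoice c ∧ NoChoice d
  | .choice _ _ => False
  | .ite _ c d => NoChoice c ∧ NoChoice d
  | .whileDo _ c => NoChoice c


lemma ssc_iff {α : Type*} {Q : Set (Set α)} :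
    Q = ssc Q ↔ ∀ p q : Set α, q ∈ Q → p ⊆ q → p ∈ Q := by
  constructor
  · intro h p q hq hpq
    rw [h]; exact ⟨q, hq, hpq⟩
  · intro h
    apply Set.Subset.antisymm
    · intro p hp; exact ⟨p, hp, le_rfl⟩
    · rintro p ⟨q, hq, hpq⟩; exact h p q hq hpq

lemma pow_closed {α : Type*} (p : Set α) :
    ({u | u ⊆ p} : Set (Set α)) = ssc {u | u ⊆ p} :=
  ssc_iff.mpr (fun a b hb hab => hab.trans hb)

/-- Lemma 10: if every atom's transformer `⟨⟦atm⟧ᵣ⟩` satisfies PSC, then for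
every command `c` and every subset closed `Q`, the collection `⟦c⟧ₕ Q` is subset
closed. -/
theorem stmt18 {σ A B : Type*} (ratm : A → Set (σ × σ)) (bsem : B → Set σ)
    (hatm : ∀ a : A, PSC (dirimg (ratm a))) :
    ∀ (c : Cmd A B) (Q : Set (Set σ)), Q = ssc Q →
      hSem ratm bsem c Q = ssc (hSem ratm bsem c Q) := by

  intro c
  induction c with
  | atom a =>
    intro Q hQ
    rw [ssc_iff] at hQ ⊢
    rintro p q ⟨r, hr, rfl⟩ hpq
    obtain ⟨s, hs, hφ⟩ := (hatm a).2 r p hpq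
    exact ⟨s, hQ s r hr hs, hφ.symm⟩
  | skip =>
    intro Q hQ; exact hQ
  | seq c d ihc ihd =>
    intro Q hQ; exact ihd _ (ihc _ hQ)
  | choice c d ihc ihd =>
    intro Q hQ
    rw [ssc_iff] at hQ ⊢
    rintro t' t ⟨p, hp, r, hr, s, hs, rfl⟩ ht
    refine ⟨p, hp, t' ∩ r, ?_, t' ∩ s, ?_, ?_⟩
    · exact ssc_iff.mp (ihc _ (pow_closed p)) _ _ hr Set.inter_subset_right
    · exact ssc_iff.mp (ihd _ (pow_closed p)) _ _ hs Set.inter_subset_right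
    · rw [← Set.inter_union_distrib_left]
      exact (Set.inter_eq_left.mpr ht).symm
  | ite b c d ihc ihd =>
    intro Q hQ
    rw [ssc_iff] at hQ ⊢
    rintro t' t ⟨p, hp, r, hr, s, hs, rfl⟩ ht
    refine ⟨p, hp, t' ∩ r, ?_, t' ∩ s, ?_, ?_⟩
    · exact ssc_iff.mp (ihc _ (pow_closed _)) _ _ hr Set.inter_subset_right
    · exact ssc_iff.mp (ihd _ (pow_closed _)) _ _ hs Set.inter_subset_right
    · rw [← Set.inter_union_distrib_left]
      exact (Set.inter_eq_left.mpr ht).symm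
  | whileDo b c ihc =>
    intro Q hQ
    rw [ssc_iff]
    intro t' t ht ht'
    simp only [hSem, hlfp, Set.mem_sInter, Set.mem_setOf_eq] at ht ⊢
    rcases Set.eq_empty_or_nonempty Q with hE | hNE
    · exfalso
      subst hE
      classical
      have h0 : t ∈ (∅ : Set (Set σ)) := by
        refine ht ∅ ⟨fun Q => if Q = ∅ then ∅ else Set.univ, ?_, ?_, ?_, ?_⟩
        · intro Q' hQ'
          simp only [if_neg (Set.nonempty_iff_ne_empty.mp hQ'.1)]
          refine ⟨⟨∅, trivial⟩, ?_⟩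
          exact Set.Subset.antisymm (fun p _ => ⟨p, trivial, le_rfl⟩)
            (fun p _ => trivial)
        · intro Q₁ Q₂ h₁ h₂ _
          simp only [if_neg (Set.nonempty_iff_ne_empty.mp h₁.1),
            if_neg (Set.nonempty_iff_ne_empty.mp h₂.1)]
          exact subset_rfl
        · intro Q' hQ'
          simp only [if_neg (Set.nonempty_iff_ne_empty.mp hQ'.1)]
          exact fun _ _ => trivial
        · simp
      exact h0
    · rintro R ⟨Φ, hDp, hmono, hpre, rfl⟩
      have hQdp : InDpset Q := ⟨hNE, hQ⟩
      exact ssc_iff.mp (hDp Q hQdp).2 _ _ (ht _ ⟨Φ, hDp, hmono, hpre, rfl⟩) ht'
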